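/- For all n×n pairwise comparison matrices A and B, the unnormalised compatibility index satisfies D_{3u}(A,B) = (1/n²) · Σ_{i=1}^n Σ_{j=1}^n a_ij·b_ji ≥ 1 (equivalently, Σ_{i=1}^n Σ_{j=1}^n a_ij·b_ji ≥ n²), with equality if and only if A = B. -/

import Mathlib

/-- An `n × n` real matrix is a pairwise comparison matrix (PCM) if all entries are
positive and it is reciprocal: `A j i = 1 / A i j`. -/
def IsPCM {n : ℕ} (A : Matrix (Fin n) (Fin n) ℝ) : Prop :=
  ∀ i j, 0 < A i j ∧ A j i = 1 / A i j

/-- Saaty's unnormalised compatibility index `D3u`. -/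
noncomputable def D3u {n : ℕ} (A B : Matrix (Fin n) (Fin n) ℝ) : ℝ :=
  (1 / (n ^ 2 : ℝ)) * ∑ i, ∑ j, A i j * B j i


/-! Put `x i j = a_ij b_ji`. The matrix `x` is again a PCM, so summing over all pairs twice,
once as `x i j` and once as `x j i = (x i j)⁻¹`, gives `2 Σ x i j = Σ (x i j + (x i j)⁻¹) ≥ 2 n²`
by `t + t⁻¹ ≥ 2`, with equality exactly when every `x i j = 1`, i.e. `a_ij = 1 / b_ji = b_ij`. -/

open Finset Matrix

lemma add_inv_sub_two_eq {x : ℝ} (hx : 0 < x) : x + x⁻¹ - 2 = (x - 1) ^ 2 / x := by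
  field_simp
  ring

lemma two_le_add_inv {x : ℝ} (hx : 0 < x) : 2 ≤ x + x⁻¹ := by
  have := add_inv_sub_two_eq hx
  have : 0 ≤ (x - 1) ^ 2 / x := by positivity
  linarith

lemma add_inv_eq_two_iff {x : ℝ} (hx : 0 < x) : x + x⁻¹ = 2 ↔ x = 1 := by
  rw [← sub_eq_zero, add_inv_sub_two_eq hx, div_eq_zero_iff,
    pow_eq_zero_iff two_ne_zero, sub_eq_zero]
  exact or_iff_left hx.ne'

lemma sum_sum_const_fin (n : ℕ) (c : ℝ) : ∑ _i : Fin n, ∑ _j : Fin n, c = c * (n : ℝ) ^ 2 := by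
  simp only [sum_const, card_univ, Fintype.card_fin, nsmul_eq_mul]
  ring

namespace IsPCM

variable {n : ℕ} {A B M : Matrix (Fin n) (Fin n) ℝ}

lemma pos (hM : IsPCM M) (i j : Fin n) : 0 < M i j := (hM i j).1

lemma apply_swap (hM : IsPCM M) (i j : Fin n) : M j i = (M i j)⁻¹ := by
  rw [(hM i j).2, one_div]

lemma hadamard_transpose (hA : IsPCM A) (hB : IsPCM B) : IsPCM (A ⊙ Bᵀ) := fun i j =>
  ⟨mul_pos (hA.pos i j) (hB.pos j i), by
    simp only [hadamard_apply, transpose_apply, hA.apply_swap i j, hB.apply_swap j i,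
      one_div, mul_inv]⟩

lemma sum_inv_eq_sum (hM : IsPCM M) : ∑ i, ∑ j, (M i j)⁻¹ = ∑ i, ∑ j, M i j := by
  rw [Finset.sum_comm]
  simp only [← hM.apply_swap]

lemma two_mul_sum (hM : IsPCM M) : 2 * ∑ i, ∑ j, M i j = ∑ i, ∑ j, (M i j + (M i j)⁻¹) := by
  simp only [sum_add_distrib, hM.sum_inv_eq_sum]
  ring

lemma sq_le_sum (hM : IsPCM M) : (n : ℝ) ^ 2 ≤ ∑ i, ∑ j, M i j := by
  suffices 2 * (n : ℝ) ^ 2 ≤ 2 * ∑ i, ∑ j, M i j by linarith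
  rw [← sum_sum_const_fin, hM.two_mul_sum]
  exact sum_le_sum fun i _ => sum_le_sum fun j _ => two_le_add_inv (hM.pos i j)

lemma sum_eq_sq_iff (hM : IsPCM M) : ∑ i, ∑ j, M i j = (n : ℝ) ^ 2 ↔ ∀ i j, M i j = 1 := by
  have hterm i j : 2 ≤ M i j + (M i j)⁻¹ := two_le_add_inv (hM.pos i j)
  rw [← mul_right_inj' (two_ne_zero' ℝ), hM.two_mul_sum, ← sum_sum_const_fin, eq_comm,
    sum_eq_sum_iff_of_le fun i _ => sum_le_sum fun j _ => hterm i j]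
  refine forall_congr' fun i => ?_
  rw [sum_eq_sum_iff_of_le fun j _ => hterm i j]
  simp only [mem_univ, true_imp_iff, eq_comm (a := (2 : ℝ)), add_inv_eq_two_iff (hM.pos i _)]

lemma mul_apply_swap_eq_one_iff (hB : IsPCM B) :
    (∀ i j, A i j * B j i = 1) ↔ A = B := by
  rw [← Matrix.ext_iff]
  refine forall₂_congr fun i j => ?_
  rw [hB.apply_swap, ← div_eq_mul_inv, div_eq_one_iff_eq (hB.pos i j).ne']

end IsPCM

lemma D3u_eq_sum_hadamard_div {n : ℕ} (A B : Matrix (Fin n) (Fin n) ℝ) :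
    D3u A B = (∑ i, ∑ j, (A ⊙ Bᵀ) i j) / (n : ℝ) ^ 2 := by
  rw [D3u, one_div_mul_eq_div]
  rfl

/-- For PCMs `A` and `B`, `D3u(A,B) ≥ 1` (equivalently `Σᵢⱼ aᵢⱼ·bⱼᵢ ≥ n²`),
with equality if and only if `A = B`. -/
theorem D3u_ge_one {n : ℕ} (hn : 0 < n) (A B : Matrix (Fin n) (Fin n) ℝ)
    (hA : IsPCM A) (hB : IsPCM B) :
    1 ≤ D3u A B ∧ (n ^ 2 : ℝ) ≤ ∑ i, ∑ j, A i j * B j i ∧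
      (D3u A B = 1 ↔ A = B) := by
  have hM := hA.hadamard_transpose hB
  have hn2 : (0 : ℝ) < (n : ℝ) ^ 2 := by positivity
  refine ⟨?_, hM.sq_le_sum, ?_⟩
  · rw [D3u_eq_sum_hadamard_div, one_le_div hn2]
    exact hM.sq_le_sum
  · rw [D3u_eq_sum_hadamard_div, div_eq_one_iff_eq hn2.ne', hM.sum_eq_sq_iff]
    exact hB.mul_apply_swap_eq_one_iff
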